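/- Let 𝒰 and 𝒱 be finite sets of pairwise disjoint closed intervals of non-zero length in ℝ, and let l and s' be positive integers such that I ∩ (l * J) ≠ ∅ and |J| ≤ s'·|I| for every I ∈ 𝒰 and J ∈ 𝒱. If |𝒰| ≥ s' + 6, then |𝒱| ≤ 2 s' l². -/

import Mathlib

open MeasureTheory Set Pointwise Metric Function
open scoped RealInnerProductSpace ENNReal

noncomputable section

/-- `ℝ^d` as a Euclidean space. -/
abbrev Euc (d : ℕ) := EuclideanSpace ℝ (Fin d)

/-- A shape: a compact set that is non-degenerate, i.e. not contained in a proper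
affine subspace. -/
def IsShape {d : ℕ} (B : Set (Euc d)) : Prop :=
  IsCompact B ∧ affineSpan ℝ B = ⊤

/-- `B₁ ⊑ₛ B₂`: for every `x ∈ B₂` there is a translate `B₁'` of `B₁` with `x ∈ B₁'`
and `vol (B₁' ∩ B₂) ≥ vol B₁ / s`. -/
def SqIn {d : ℕ} (s : ℝ) (B₁ B₂ : Set (Euc d)) : Prop :=
  ∀ x ∈ B₂, ∃ v : Euc d, x ∈ v +ᵥ B₁ ∧
    volume B₁ / ENNReal.ofReal s ≤ volume ((v +ᵥ B₁) ∩ B₂)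

/-- `B₁` and `B₂` are `⊑ₛ`-comparable. -/
def SqComparable {d : ℕ} (s : ℝ) (B₁ B₂ : Set (Euc d)) : Prop :=
  SqIn s B₁ B₂ ∨ SqIn s B₂ B₁

/-- `B₁ ≤ₖ B₂`: some translate of `B₁` is contained in `k • B₂`. -/
def LeK {d : ℕ} (k : ℝ) (B₁ B₂ : Set (Euc d)) : Prop :=
  ∃ v : Euc d, v +ᵥ B₁ ⊆ k • B₂

/-- `B₁ ≤_{k,s} B₂`: for every `x ∈ k • B₂` there are a translate `B₁'` of `B₁` and a
translate `B₁''` of `s • B₁` with `x ∈ B₁''` and `B₁' ⊆ B₁'' ∩ k • B₂`. -/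
def LeKS {d : ℕ} (k s : ℝ) (B₁ B₂ : Set (Euc d)) : Prop :=
  ∀ x ∈ k • B₂, ∃ v w : Euc d,
    x ∈ w +ᵥ (s • B₁) ∧ v +ᵥ B₁ ⊆ (w +ᵥ (s • B₁)) ∩ (k • B₂)

/-- An intersection representation of a graph in `ℝ^d`. -/
def IsIntersectionRep {V : Type*} {d : ℕ} (G : SimpleGraph V) (φ : V → Set (Euc d)) : Prop :=
  (∀ v, (φ v).Nonempty) ∧ ∀ u v : V, u ≠ v → ((φ u ∩ φ v).Nonempty ↔ G.Adj u v)

/-- A representation is `c`-thin if every point lies in at most `c` of the sets. -/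
def IsThin {V : Type*} {d : ℕ} (c : ℝ) (φ : V → Set (Euc d)) : Prop :=
  ∀ x : Euc d, ({v : V | x ∈ φ v}.ncard : ℝ) ≤ c

/-- A `(c,⊑ₛ)`-tame representation. -/
def IsTame {V : Type*} {d : ℕ} (c s : ℝ) (G : SimpleGraph V) (φ : V → Set (Euc d)) : Prop :=
  IsIntersectionRep G φ ∧ IsThin c φ ∧
    (∀ v, Convex ℝ (φ v) ∧ IsShape (φ v)) ∧
    ∀ u v : V, SqComparable s (φ u) (φ v)

/-- An `S`-shaped representation: each vertex is assigned a translate of a shape in `S`. -/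
def IsSShaped {V : Type*} {d : ℕ} (S : Set (Set (Euc d))) (φ : V → Set (Euc d)) : Prop :=
  ∀ v, ∃ B ∈ S, ∃ t : Euc d, φ v = t +ᵥ B

/-- `X` is a balanced separator: every component of `G - X` has at most `(2/3)|V(G)|`
vertices. -/
def IsBalancedSeparator {V : Type*} [Fintype V] (G : SimpleGraph V) (X : Set V) : Prop :=
  ∀ C : (G.induce Xᶜ).ConnectedComponent,
    (C.supp.ncard : ℝ) ≤ 2 / 3 * Fintype.card V

/-- `L_{G,≺,r}(v)`, where the linear ordering `≺` is encoded by an injective `ρ : V → ℕ`: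
the set of vertices `x ⪯ v` reachable from `v` by a path of length at most `r` all of whose
internal vertices are `≻ v`. -/
def Lset {V : Type*} (G : SimpleGraph V) (ρ : V → ℕ) (r : ℕ) (v : V) : Set V :=
  {x | ρ x ≤ ρ v ∧ ∃ p : G.Walk v x, p.IsPath ∧ p.length ≤ r ∧
    ∀ z ∈ p.support, z ≠ v → z ≠ x → ρ v < ρ z}

/-- The height of a set: the least `h ≥ 0` such that the set lies between two parallel
hyperplanes at distance `h`. -/
def heightOf {d : ℕ} (B : Set (Euc d)) : ℝ :=
  sInf {h : ℝ | 0 ≤ h ∧ ∃ u : Euc d, ‖u‖ = 1 ∧ ∃ a : ℝ,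
    ∀ x ∈ B, a ≤ inner ℝ u x ∧ inner ℝ u x ≤ a + h}

/-- A parallelepiped with center `p` and sides `v₁, …, v_d`. -/
def IsParallelepiped {d : ℕ} (T : Set (Euc d)) : Prop :=
  ∃ (p : Euc d) (v : Fin d → Euc d), LinearIndependent ℝ v ∧
    T = {x | ∃ α : Fin d → ℝ, (∀ i, α i ∈ Set.Icc (-1 : ℝ) 1) ∧ x = p + ∑ i, α i • v i}

/-- `T` is an envelope of `B`: a parallelepiped of smallest volume containing `B`. -/
def IsEnvelope {d : ℕ} (T B : Set (Euc d)) : Prop :=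
  IsParallelepiped T ∧ B ⊆ T ∧
    ∀ T' : Set (Euc d), IsParallelepiped T' → B ⊆ T' → volume T ≤ volume T'

/-- A box in `ℝ^d`: a product of `d` closed intervals. -/
def IsBox {d : ℕ} (B : Set (Euc d)) : Prop :=
  ∃ a b : Fin d → ℝ, B = {x : Euc d | ∀ i, x i ∈ Set.Icc (a i) (b i)}

/-- `Q` is `k'`-fat: every ball `B` centered in `Q` satisfies
`vol (B ∩ Q) ≥ min (vol B / k') (vol Q)`. -/
def IsFat {d : ℕ} (k' : ℝ) (Q : Set (Euc d)) : Prop :=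
  ∀ x ∈ Q, ∀ ρ : ℝ, 0 < ρ →
    min (volume (Metric.closedBall x ρ) / ENNReal.ofReal k') (volume Q)
      ≤ volume (Metric.closedBall x ρ ∩ Q)

/-- The strong product of two simple graphs. -/
def strongProd {α β : Type*} (G : SimpleGraph α) (H : SimpleGraph β) :
    SimpleGraph (α × β) where
  Adj x y := x ≠ y ∧ (x.1 = y.1 ∨ G.Adj x.1 y.1) ∧ (x.2 = y.2 ∨ H.Adj x.2 y.2)
  symm := by
    constructor
    rintro ⟨a1, a2⟩ ⟨b1, b2⟩ ⟨hne, h1, h2⟩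
    refine ⟨hne.symm, ?_, ?_⟩
    · rcases h1 with h | h
      · exact Or.inl h.symm
      · exact Or.inr h.symm
    · rcases h2 with h | h
      · exact Or.inl h.symm
      · exact Or.inr h.symm
  loopless := by
    constructor
    rintro ⟨a1, a2⟩ ⟨hne, -, -⟩
    exact hne rfl

/-- The graph `G⁺(N, l)`: add hubs `v₁, …, v_N` and internally disjoint paths of length `l`
from each hub to each vertex of `G`.  The internal vertices of the path from hub `i` to
vertex `u` are `(i, u, 0), …, (i, u, l-2)`. -/
def plusGraph {V : Type*} (G : SimpleGraph V) (N l : ℕ) :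
    SimpleGraph (V ⊕ (Fin N ⊕ Fin N × V × Fin (l - 1))) :=
  SimpleGraph.fromRel (fun x y =>
    match x, y with
    | Sum.inl u, Sum.inl w => G.Adj u w
    | Sum.inr (Sum.inl _), Sum.inl _ => l = 1
    | Sum.inr (Sum.inl i), Sum.inr (Sum.inr (j, _, t)) => i = j ∧ (t : ℕ) = 0
    | Sum.inr (Sum.inr (i, u, t)), Sum.inr (Sum.inr (j, w, t')) =>
        i = j ∧ u = w ∧ (t' : ℕ) = (t : ℕ) + 1
    | Sum.inr (Sum.inr (_, u, t)), Sum.inl w => u = w ∧ (t : ℕ) = l - 2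
    | _, _ => False)

/-- `γ_d`: the supremum over affine hyperplanes `H` of the `(d-1)`-dimensional Hausdorff
measure of the intersection of `H` with the unit cube. -/
def gammaConst (d : ℕ) : ℝ :=
  sSup {γ : ℝ | ∃ (u : Euc d) (a : ℝ), ‖u‖ = 1 ∧
    γ = (MeasureTheory.Measure.hausdorffMeasure ((d : ℝ) - 1)
      ({x : Euc d | inner ℝ u x = a} ∩ {x : Euc d | ∀ i, x i ∈ Set.Icc (0 : ℝ) 1})).toReal}

/-- The sequence `ℓ_h`: `ℓ_1 = 1` and `ℓ_{h+1} = ℓ_h / (2(h+1))`. -/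
def ellSeq : ℕ → ℝ
  | 0 => 2
  | n + 1 => ellSeq n / (2 * (n + 1))

/-- The trapezoid `T_h` with vertices `(0,0)`, `(ℓ_h,0)`, `(ℓ_h, hℓ_h)`, `(0, 2hℓ_h)`. -/
def trapezoidShape (h : ℕ) : Set (Euc 2) :=
  convexHull ℝ {(!₂[0, 0] : Euc 2), !₂[ellSeq h, 0], !₂[ellSeq h, h * ellSeq h],
    !₂[0, 2 * h * ellSeq h]}

/-- An axis-aligned square `S_h` with sides of length `ℓ_h`. -/
def squareShape (h : ℕ) : Set (Euc 2) :=
  {x : Euc 2 | x 0 ∈ Set.Icc 0 (ellSeq h) ∧ x 1 ∈ Set.Icc 0 (ellSeq h)}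

/-- The set `S*` of shapes. -/
def SStar : Set (Set (Euc 2)) :=
  {B | ∃ h : ℕ, 0 < h ∧ (B = trapezoidShape h ∨ B = squareShape h)}

/-- A class of finite graphs is `⊑`-representable. -/
def SqRepresentable (𝒢 : ∀ V : Type, Fintype V → SimpleGraph V → Prop) : Prop :=
  ∃ d c s : ℕ, 0 < d ∧ 0 < c ∧ 0 < s ∧
    ∀ (V : Type) (instV : Fintype V) (G : SimpleGraph V), 𝒢 V instV G →
      ∃ S : Set (Set (Euc d)), (∀ B ∈ S, Convex ℝ B ∧ IsShape B) ∧
        S.Pairwise (SqComparable (s : ℝ)) ∧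
        ∃ φ : V → Set (Euc d), IsIntersectionRep G φ ∧ IsThin (c : ℝ) φ ∧ IsSShaped S φ

end

/-!
Let `I_L` and `I_R` be the leftmost and rightmost intervals of `𝒰`; the gap `G` between them
contains a third interval `I ∈ 𝒰`, so `|I| ≤ |G|`. For `J ∈ 𝒱`, `l * J` meets both `I_L` and
`I_R`, hence covers `G`, so `|G| ≤ l |J|`; and `|J| ≤ s' |I|`, so all of `𝒱` fits in a window of
length `2 l s' |I|` around `G`. Comparing total lengths,
`|𝒱| |G| / l ≤ 2 l s' |I| ≤ 2 l s' |G|`.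
-/

lemma sum_sub_le_of_pairwiseDisjoint_Icc {ι : Type*} {s : Finset ι} {a b : ι → ℝ} {c d : ℝ}
    (hs : s.Nonempty) (hab : ∀ i ∈ s, a i ≤ b i)
    (hdisj : (s : Set ι).PairwiseDisjoint fun i => Icc (a i) (b i))
    (hsub : ∀ i ∈ s, Icc (a i) (b i) ⊆ Icc c d) :
    ∑ i ∈ s, (b i - a i) ≤ d - c := by
  obtain ⟨i, hi⟩ := hs
  have hcd : c ≤ d := (nonempty_Icc.2 (hab i hi)).mono (hsub i hi) |> nonempty_Icc.1
  have hvol : volume (⋃ i ∈ s, Icc (a i) (b i)) ≤ volume (Icc c d) :=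
    measure_mono (iUnion₂_subset hsub)
  rw [measure_biUnion_finset hdisj fun _ _ => measurableSet_Icc] at hvol
  simp only [Real.volume_Icc] at hvol
  rwa [← ENNReal.ofReal_sum_of_nonneg fun i hi => sub_nonneg.2 (hab i hi),
    ENNReal.ofReal_le_ofReal_iff (sub_nonneg.2 hcd)] at hvol

lemma exists_Icc_between_of_pairwiseDisjoint {ι : Type*} {s : Finset ι} {a b : ι → ℝ}
    (hs : 3 ≤ s.card) (hab : ∀ i ∈ s, a i ≤ b i)
    (hdisj : (s : Set ι).PairwiseDisjoint fun i => Icc (a i) (b i)) :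
    ∃ i ∈ s, ∃ j ∈ s, ∃ k ∈ s, b i < a j ∧ b j < a k := by
  classical
  have hne : s.Nonempty := Finset.card_pos.1 (by omega)
  obtain ⟨i, hi, hi_min⟩ := s.exists_min_image a hne
  obtain ⟨k, hk, hk_max⟩ := s.exists_max_image b hne
  obtain ⟨j, hj, hj_ik⟩ :=
    Finset.exists_mem_notMem_of_card_lt_card (s := {i, k}) (Finset.card_le_two.trans_lt hs)
  simp only [Finset.mem_insert, Finset.mem_singleton, not_or] at hj_ik
  refine ⟨i, hi, j, hj, k, hk, not_le.1 fun h => ?_, not_le.1 fun h => ?_⟩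
  · exact disjoint_left.1 (hdisj hi hj (Ne.symm hj_ik.1))
      ⟨hi_min j hj, h⟩ ⟨le_rfl, hab j hj⟩
  · exact disjoint_left.1 (hdisj hj hk hj_ik.2)
      ⟨hab j hj, le_rfl⟩ ⟨h, hk_max j hj⟩

lemma card_mul_le_of_forall_smul_Icc_cover {t : Finset (ℝ × ℝ)} (ht : t.Nonempty)
    (hr : ∀ q ∈ t, 0 ≤ q.2)
    (hdisj : (t : Set (ℝ × ℝ)).PairwiseDisjoint fun q => Icc (q.1 - q.2) (q.1 + q.2))
    {l β α R : ℝ} (hl : 1 ≤ l) (hβα : β ≤ α)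
    (hcover : ∀ q ∈ t, q.1 - l * q.2 ≤ β ∧ α ≤ q.1 + l * q.2) (hR : ∀ q ∈ t, q.2 ≤ R) :
    t.card * (α - β) ≤ 4 * l ^ 2 * R := by
  have hwindow : ∀ q ∈ t,
      Icc (q.1 - q.2) (q.1 + q.2) ⊆ Icc (α - 2 * l * R) (β + 2 * l * R) := by
    intro q hq x hx
    have h₁ : q.2 ≤ l * q.2 := le_mul_of_one_le_left (hr q hq) hl
    have h₂ : l * q.2 ≤ l * R := mul_le_mul_of_nonneg_left (hR q hq) (by linarith)
    obtain ⟨hβ, hα⟩ := hcover q hq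
    constructor <;> linarith [hx.1, hx.2]
  have hsum := sum_sub_le_of_pairwiseDisjoint_Icc ht (fun q hq => by linarith [hr q hq])
    hdisj hwindow
  calc t.card * (α - β) = ∑ q ∈ t, (α - β) := by rw [Finset.sum_const, nsmul_eq_mul]
    _ ≤ ∑ q ∈ t, l * (q.1 + q.2 - (q.1 - q.2)) :=
        Finset.sum_le_sum fun q hq => by linarith [hcover q hq]
    _ = l * ∑ q ∈ t, (q.1 + q.2 - (q.1 - q.2)) := (Finset.mul_sum _ _ _).symm
    _ ≤ l * (β + 2 * l * R - (α - 2 * l * R)) := by gcongr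
    _ ≤ 4 * l ^ 2 * R := by nlinarith

theorem stmt16_general (𝒰 𝒱 : Finset (ℝ × ℝ))
    (hU : ∀ p ∈ 𝒰, 0 < p.2) (hV : ∀ p ∈ 𝒱, 0 < p.2)
    (hUdisj : (𝒰 : Set (ℝ × ℝ)).Pairwise fun p q =>
      Disjoint (Set.Icc (p.1 - p.2) (p.1 + p.2)) (Set.Icc (q.1 - q.2) (q.1 + q.2)))
    (hVdisj : (𝒱 : Set (ℝ × ℝ)).Pairwise fun p q =>
      Disjoint (Set.Icc (p.1 - p.2) (p.1 + p.2)) (Set.Icc (q.1 - q.2) (q.1 + q.2)))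
    (l s' : ℕ) (hl : 0 < l)
    (hmeet : ∀ p ∈ 𝒰, ∀ q ∈ 𝒱,
      (Set.Icc (p.1 - p.2) (p.1 + p.2) ∩
        Set.Icc (q.1 - (l : ℝ) * q.2) (q.1 + (l : ℝ) * q.2)).Nonempty)
    (hlen : ∀ p ∈ 𝒰, ∀ q ∈ 𝒱, 2 * q.2 ≤ (s' : ℝ) * (2 * p.2))
    (hcard : s' + 6 ≤ 𝒰.card) :
    𝒱.card ≤ 2 * s' * l ^ 2 := by
  obtain ⟨pL, hpL, pM, hpM, pR, hpR, hLM, hMR⟩ :=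
    exists_Icc_between_of_pairwiseDisjoint (by omega) (fun p hp => by linarith [hU p hp]) hUdisj
  rcases 𝒱.eq_empty_or_nonempty with rfl | h𝒱
  · simp
  have hgap : 2 * pM.2 ≤ (pR.1 - pR.2) - (pL.1 + pL.2) := by linarith
  have hLR : pL.1 + pL.2 < pR.1 - pR.2 := by linarith [hU pM hpM]
  have hcover : ∀ q ∈ 𝒱, q.1 - l * q.2 ≤ pL.1 + pL.2 ∧ pR.1 - pR.2 ≤ q.1 + l * q.2 :=
    fun q hq => ⟨(hmeet pL hpL q hq).elim fun _ hx => hx.2.1.trans hx.1.2,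
      (hmeet pR hpR q hq).elim fun _ hx => hx.1.1.trans hx.2.2⟩
  have hbound := card_mul_le_of_forall_smul_Icc_cover (l := l) (R := s' * pM.2) h𝒱
    (fun q hq => (hV q hq).le) hVdisj (by exact_mod_cast hl) hLR.le hcover
    fun q hq => by linarith [hlen pM hpM q hq]
  have hscale := mul_le_mul_of_nonneg_left hgap (by positivity : (0 : ℝ) ≤ 2 * s' * l ^ 2)
  have : (𝒱.card : ℝ) ≤ 2 * s' * l ^ 2 := le_of_mul_le_mul_right
    (show (𝒱.card : ℝ) * _ ≤ 2 * s' * l ^ 2 * _ by linarith) (sub_pos.2 hLR)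
  exact_mod_cast this

theorem stmt16 (𝒰 𝒱 : Finset (ℝ × ℝ))
    (hU : ∀ p ∈ 𝒰, 0 < p.2) (hV : ∀ p ∈ 𝒱, 0 < p.2)
    (hUdisj : (𝒰 : Set (ℝ × ℝ)).Pairwise fun p q =>
      Disjoint (Set.Icc (p.1 - p.2) (p.1 + p.2)) (Set.Icc (q.1 - q.2) (q.1 + q.2)))
    (hVdisj : (𝒱 : Set (ℝ × ℝ)).Pairwise fun p q =>
      Disjoint (Set.Icc (p.1 - p.2) (p.1 + p.2)) (Set.Icc (q.1 - q.2) (q.1 + q.2)))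
    (l s' : ℕ) (hl : 0 < l) (hs' : 0 < s')
    (hmeet : ∀ p ∈ 𝒰, ∀ q ∈ 𝒱,
      (Set.Icc (p.1 - p.2) (p.1 + p.2) ∩
        Set.Icc (q.1 - (l : ℝ) * q.2) (q.1 + (l : ℝ) * q.2)).Nonempty)
    (hlen : ∀ p ∈ 𝒰, ∀ q ∈ 𝒱, 2 * q.2 ≤ (s' : ℝ) * (2 * p.2))
    (hcard : s' + 6 ≤ 𝒰.card) :
    𝒱.card ≤ 2 * s' * l ^ 2 :=
  stmt16_general 𝒰 𝒱 hU hV hUdisj hVdisj l s' hl hmeet hlen hcard
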